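/- Let A be a left brace of cardinality p^n for a prime p and a natural number n, satisfying Property 2 for a natural number k, and let f : A → A satisfy p^k·f(a) = a^{∘p^k} for all a ∈ A. Define g(a) = f^{(p^n! − 1)}(a), where f^{(1)} = f and f^{(i+1)}(a) = f(f^{(i)}(a)). Then for every a ∈ A: f(g(a)) − a ∈ ann(p^{2k}), g(f(a)) − a ∈ ann(p^{2k}), and g^{(p^n! − 1)}(a) − f(a) ∈ ann(p^{2k}), where g^{(1)} = g and g^{(i+1)}(a) = g(g^{(i)}(a)). -/
import Mathlib

section AuxQuot
variable {A : Type*} [AddCommGroup A]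

/-- The subgroup of elements killed by `m`. -/
def Ksub (A : Type*) [AddCommGroup A] (m : ℕ) : AddSubgroup A where
  carrier := {a : A | m • a = 0}
  zero_mem' := by simp
  add_mem' := by intro a b ha hb; simp only [Set.mem_setOf_eq, smul_add] at *; rw [ha, hb, add_zero]
  neg_mem' := by intro a ha; simp only [Set.mem_setOf_eq, smul_neg] at *; rw [ha, neg_zero]

lemma Ksub_eq (m : ℕ) (a b : A) :
    (QuotientAddGroup.mk a : A ⧸ Ksub A m) = QuotientAddGroup.mk b ↔ m • a = m • b := by
  rw [QuotientAddGroup.eq]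
  constructor
  · intro h
    have : m • (-a + b) = 0 := h
    rw [smul_add, smul_neg, neg_add_eq_zero] at this
    exact this
  · intro h
    show m • (-a + b) = 0
    rw [smul_add, smul_neg, h, neg_add_cancel]

/-- If `f : A → A` reflects and preserves equality mod `m`, and `A` is finite with
`Nat.card A ≤ c`, then for every `a`, `m • f^[c!] a = m • a`,
and `m • f^[(c! - 1) * (c! - 1)] a = m • f a` provided `2 ≤ c!`. -/
lemma iterate_mod (m : ℕ) [Finite A] (f : A → A)
    (hiff : ∀ a b : A, m • f a = m • f b ↔ m • a = m • b) (c : ℕ)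
    (hc : Nat.card A ≤ c) :
    (∀ a : A, m • f^[Nat.factorial c] a = m • a) ∧
    (2 ≤ Nat.factorial c →
      ∀ a : A, m • f^[(Nat.factorial c - 1) * (Nat.factorial c - 1)] a = m • f a) := by
  classical
  set Q := A ⧸ Ksub A m with hQ
  have hresp : ∀ a b : A, (QuotientAddGroup.mk a : Q) = QuotientAddGroup.mk b →
      (QuotientAddGroup.mk (f a) : Q) = QuotientAddGroup.mk (f b) := by
    intro a b h
    rw [Ksub_eq] at h ⊢
    exact (hiff a b).mpr h
  set F : Q → Q := fun q => Quotient.liftOn' q (fun a => (QuotientAddGroup.mk (f a) : Q))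
    (fun a b hab => hresp a b (Quotient.sound' hab)) with hF
  have hFmk : ∀ a : A, F (QuotientAddGroup.mk a) = QuotientAddGroup.mk (f a) := fun a => rfl
  have hFinj : Function.Injective F := by
    intro x y
    induction x using QuotientAddGroup.induction_on with | H a =>
    induction y using QuotientAddGroup.induction_on with | H b =>
    intro h
    rw [hFmk, hFmk, Ksub_eq] at h
    rw [Ksub_eq]
    exact (hiff a b).mp h
  have : Finite Q := Quotient.finite _
  have hFbij : Function.Bijective F := Finite.injective_iff_bijective.mp hFinj
  set σ : Equiv.Perm Q := Equiv.ofBijective F hFbij with hσ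
  have hσF : ∀ j : ℕ, ∀ q : Q, (σ ^ j) q = F^[j] q := by
    intro j
    induction j with
    | zero => intro q; simp
    | succ j ih =>
      intro q
      rw [pow_succ', Function.iterate_succ']
      simp only [Equiv.Perm.coe_mul, Function.comp_apply, ih]
      rfl
  have hFmkiter : ∀ j : ℕ, ∀ a : A, F^[j] (QuotientAddGroup.mk a) = QuotientAddGroup.mk (f^[j] a) := by
    intro j
    induction j with
    | zero => intro a; rfl
    | succ j ih =>
      intro a
      rw [Function.iterate_succ', Function.iterate_succ']
      simp only [Function.comp_apply, ih, hFmk]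
  have hord : σ ^ Nat.factorial c = 1 := by
    have h1 : orderOf σ ∣ Nat.card (Equiv.Perm Q) := orderOf_dvd_natCard σ
    have h2 : Nat.card (Equiv.Perm Q) = Nat.factorial (Nat.card Q) := by
      have := Fintype.ofFinite Q
      rw [Nat.card_eq_fintype_card, Nat.card_eq_fintype_card, Fintype.card_perm]
    have h3 : Nat.card Q ≤ Nat.card A :=
      Nat.card_le_card_of_surjective _ (QuotientAddGroup.mk'_surjective _)
    have h4 : Nat.factorial (Nat.card Q) ∣ Nat.factorial c :=
      Nat.factorial_dvd_factorial (le_trans h3 hc)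
    exact orderOf_dvd_iff_pow_eq_one.mp (h1.trans (h2 ▸ h4))
  constructor
  · intro a
    have : (σ ^ Nat.factorial c) (QuotientAddGroup.mk a) = QuotientAddGroup.mk a := by
      rw [hord]; rfl
    rw [hσF, hFmkiter, Ksub_eq] at this
    exact this
  · intro h2f a
    have harith : (Nat.factorial c - 1) * (Nat.factorial c - 1)
        = Nat.factorial c * (Nat.factorial c - 2) + 1 := by
      obtain ⟨t, ht⟩ := Nat.exists_eq_add_of_le h2f
      have e1 : Nat.factorial c - 1 = t + 1 := by omega
      have e2 : Nat.factorial c - 2 = t := by omega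
      rw [e1, e2, ht]; ring
    have : (σ ^ ((Nat.factorial c - 1) * (Nat.factorial c - 1))) (QuotientAddGroup.mk a)
        = σ (QuotientAddGroup.mk a) := by
      rw [harith, pow_add, pow_mul, hord, one_pow, pow_one, one_mul]
    rw [hσF, hFmkiter] at this
    have hrhs : σ ((QuotientAddGroup.mk a : Q)) = QuotientAddGroup.mk (f a) := hFmk a
    rw [hrhs, Ksub_eq] at this
    exact this

end AuxQuot


/-- A left brace: `(A, +)` abelian group, `(A, ∘)` a group (with identity `cone`
and inverse `cinv`), satisfying `a ∘ (b + c) + a = a ∘ b + a ∘ c`. -/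
class LeftBrace (A : Type*) extends AddCommGroup A where
  circ : A → A → A
  cone : A
  cinv : A → A
  circ_assoc : ∀ a b c : A, circ (circ a b) c = circ a (circ b c)
  circ_cone : ∀ a : A, circ a cone = a
  cone_circ : ∀ a : A, circ cone a = a
  circ_cinv : ∀ a : A, circ a (cinv a) = cone
  cinv_circ : ∀ a : A, circ (cinv a) a = cone
  circ_add : ∀ a b c : A, circ a (b + c) + a = circ a b + circ a c

namespace LeftBrace

variable {A : Type*} [LeftBrace A]

/-- The brace operation `a * b = a ∘ b - a - b`. -/
def bstar (a b : A) : A := circ a b - a - b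

/-- `ann (p^i) = {a : p^i • a = 0}`. -/
def ann (p i : ℕ) : Set A := {a : A | (p ^ i : ℕ) • a = 0}

/-- `p^i • A = {p^i • a : a ∈ A}`. -/
def pA (p i : ℕ) : Set A := Set.range (fun a : A => (p ^ i : ℕ) • a)

/-- An ideal of a left brace: an additive subgroup closed under `*` on both sides. -/
def IsIdeal (I : Set A) : Prop :=
  (0 : A) ∈ I ∧ (∀ x ∈ I, ∀ y ∈ I, x + y ∈ I) ∧ (∀ x ∈ I, -x ∈ I) ∧
  (∀ a : A, ∀ x ∈ I, bstar a x ∈ I) ∧ (∀ a : A, ∀ x ∈ I, bstar x a ∈ I)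

/-- `eIter a b m = e'_m(a,b)` for `m ≥ 1`, with `eIter a b 0 = b`;
so `e'_1(a,b) = a * b` and `e'_{m+1}(a,b) = a * e'_m(a,b)`. -/
def eIter (a b : A) : ℕ → A
  | 0 => b
  | m + 1 => bstar a (eIter a b m)

/-- `circPow a j = a^{∘ j}`, the `j`-fold `∘`-product of `a` with itself. -/
def circPow (a : A) : ℕ → A
  | 0 => cone
  | j + 1 => circ a (circPow a j)

/-- Property 1 (with `c = ⌊(p-1)/4⌋`). -/
def Property1 (p : ℕ) (A : Type*) [LeftBrace A] : Prop :=
  (∀ a b : A, eIter a b ((p - 1) / 4) ∈ pA p 1) ∧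
  (∀ i : ℕ, 1 ≤ i → ∀ a : A, ∀ b ∈ ann p i, eIter a b ((p - 1) / 4) ∈ ann p (i - 1))

end LeftBrace

open LeftBrace

/-- Property 2 for the pair `(p, k)`. -/
def Property2 (p k : ℕ) (A : Type*) [LeftBrace A] : Prop :=
  (∀ a b : A, (p ^ (2 * k) : ℕ) • a = (p ^ (2 * k) : ℕ) • b ↔
      (p ^ k : ℕ) • circPow a (p ^ k) = (p ^ k : ℕ) • circPow b (p ^ k)) ∧
  (∀ i : ℕ, IsIdeal (pA p i : Set A) ∧ IsIdeal (ann p i : Set A)) ∧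
  (∀ i j : ℕ, i ≤ j → ∀ x : A, x ∈ pA p i → ∀ y ∈ ann p j, bstar x y ∈ ann p (j - i))

theorem statement3 {A : Type*} [LeftBrace A] [Fintype A] (p n k : ℕ) (hp : p.Prime)
    (hcard : Fintype.card A = p ^ n) (hP2 : Property2 p k A)
    (f : A → A) (hf : ∀ a : A, (p ^ k : ℕ) • f a = circPow a (p ^ k)) :
    ∀ a : A,
      f ((f^[Nat.factorial (p ^ n) - 1]) a) - a ∈ ann p (2 * k) ∧
      (f^[Nat.factorial (p ^ n) - 1]) (f a) - a ∈ ann p (2 * k) ∧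
      ((f^[Nat.factorial (p ^ n) - 1])^[Nat.factorial (p ^ n) - 1]) a - f a
        ∈ ann p (2 * k) := by
  classical
  -- the key congruence: `f` preserves and reflects equality mod `p^(2k)`
  have hiff : ∀ x y : A, (p ^ (2*k) : ℕ) • f x = (p ^ (2*k) : ℕ) • f y ↔
      (p ^ (2*k) : ℕ) • x = (p ^ (2*k) : ℕ) • y := by
    intro x y
    have key : ∀ z : A, (p ^ (2*k) : ℕ) • f z = (p ^ k : ℕ) • circPow z (p ^ k) := by
      intro z
      have : (p : ℕ) ^ (2*k) = p ^ k * p ^ k := by rw [two_mul, pow_add]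
      rw [this, mul_smul, hf]
    rw [key, key, ← hP2.1]
  have hfin : Finite A := Finite.of_fintype A
  have hcard' : Nat.card A ≤ p ^ n := by rw [Nat.card_eq_fintype_card, hcard]
  obtain ⟨h1, h2⟩ := iterate_mod (p ^ (2*k)) f hiff (p ^ n) hcard'
  set M := Nat.factorial (p ^ n) with hM
  have hM1 : 1 ≤ M := Nat.factorial_pos _
  have hsub : ∀ x y : A, (p ^ (2*k) : ℕ) • x = (p ^ (2*k) : ℕ) • y →
      x - y ∈ (ann p (2*k) : Set A) := by
    intro x y h
    show (p ^ (2*k) : ℕ) • (x - y) = 0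
    rw [smul_sub, h, sub_self]
  intro a
  refine ⟨?_, ?_, ?_⟩
  · have : f (f^[M - 1] a) = f^[M] a := by
      conv_rhs => rw [show M = (M - 1) + 1 by omega]
      rw [Function.iterate_succ_apply']
    rw [this]
    exact hsub _ _ (h1 a)
  · have : f^[M - 1] (f a) = f^[M] a := by
      conv_rhs => rw [show M = (M - 1) + 1 by omega]
      rw [Function.iterate_succ_apply]
    rw [this]
    exact hsub _ _ (h1 a)
  · by_cases hpn : 2 ≤ p ^ n
    · have hM2 : 2 ≤ M := le_trans hpn (Nat.self_le_factorial _)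
      have : (f^[M - 1])^[M - 1] a = f^[(M - 1) * (M - 1)] a := by
        rw [← Function.iterate_mul]
      rw [this]
      exact hsub _ _ (h2 hM2 a)
    · have hone : p ^ n = 1 := by
        have := Nat.one_le_iff_ne_zero.mpr (pow_ne_zero n hp.pos.ne')
        omega
      have : Subsingleton A := by
        rw [← Fintype.card_le_one_iff_subsingleton, hcard, hone]
      show (p ^ (2*k) : ℕ) • _ = 0
      rw [Subsingleton.elim ((f^[M - 1])^[M - 1] a - f a) 0, smul_zero]
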